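/- arXiv:2108.12653 — 6 statements merged into one kernel-verified Lean document; each statement's English description precedes it below -/
import Mathlib

section
/- Let f be a monic complex polynomial of degree q ≥ 2. Then the complement Ω_f := ℂ \ K(f) of the filled Julia set is connected. -/
/-!
Outside a large disc `‖z‖ ≤ R` a polynomial of degree at least two at least doubles the norm,
so `K(f)` is the set of points whose whole orbit stays in that disc; in particular it is closed
and misses the connected region `R < ‖z‖`. A component `U` of the complement that stayed inside
the disc would be bounded with `∂U ⊆ K(f)`, and the maximum modulus principle applied to the
iterates of `f` would put `U` inside `K(f)`. So every component meets the connected region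
`R < ‖z‖`, and the complement is connected.
-/

/-- The filled Julia set of a polynomial `f`: the set of points whose forward orbit
under `f` is bounded. -/
def filledJulia (f : Polynomial ℂ) : Set ℂ :=
  {z : ℂ | Bornology.IsBounded (Set.range fun n : ℕ => (fun w : ℂ => f.eval w)^[n] z)}

open Filter Bornology Metric Set Polynomial

namespace Polynomial

variable {𝕜 : Type*} [NormedDivisionRing 𝕜]

theorem eventually_two_mul_norm_le_norm_eval {f : 𝕜[X]} (hf : 2 ≤ f.natDegree) :
    ∀ᶠ z in cobounded 𝕜, 2 * ‖z‖ ≤ ‖f.eval z‖ := by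
  have hdivX : 0 < f.divX.degree := by
    rw [← natDegree_pos_iff_degree_pos, natDegree_divX_eq_natDegree_tsub_one]
    omega
  -- `f = divX f * X + f(0)`, and `divX f` tends to infinity
  filter_upwards
    [(f.divX.tendsto_norm_atTop hdivX tendsto_norm_cobounded_atTop).eventually_ge_atTop 3,
    eventually_cobounded_le_norm ‖f.coeff 0‖] with z hlarge hz
  calc 2 * ‖z‖ ≤ ‖f.divX.eval z‖ * ‖z‖ - ‖f.coeff 0‖ := by nlinarith [norm_nonneg z]
    _ = ‖f.divX.eval z * z‖ - ‖-f.coeff 0‖ := by rw [norm_mul, norm_neg]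
    _ ≤ ‖f.divX.eval z * z - -f.coeff 0‖ := norm_sub_norm_le _ _
    _ = ‖f.eval z‖ := by
      conv_rhs => rw [← divX_mul_X_add f]
      simp

end Polynomial

section Escape

variable {E : Type*} [SeminormedAddCommGroup E] {g : E → E} {R : ℝ}

theorem two_pow_mul_norm_le_norm_iterate (hg : ∀ z, R ≤ ‖z‖ → 2 * ‖z‖ ≤ ‖g z‖) {z : E}
    (hz : R ≤ ‖z‖) (n : ℕ) : 2 ^ n * ‖z‖ ≤ ‖g^[n] z‖ := by
  induction n with
  | zero => simp
  | succ n ih =>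
    have hRn : R ≤ ‖g^[n] z‖ := by
      nlinarith [one_le_pow₀ (M₀ := ℝ) one_le_two (n := n), norm_nonneg z]
    rw [Function.iterate_succ_apply', pow_succ']
    linarith [hg _ hRn]

theorem not_isBounded_range_iterate (hg : ∀ z, R ≤ ‖z‖ → 2 * ‖z‖ ≤ ‖g z‖) (hR : 0 ≤ R)
    {z : E} (hz : R < ‖z‖) : ¬IsBounded (range fun n => g^[n] z) := by
  rw [isBounded_iff_forall_norm_le]
  rintro ⟨C, hC⟩
  have htendsto : Tendsto (fun n : ℕ => 2 ^ n * ‖z‖) atTop atTop :=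
    (tendsto_pow_atTop_atTop_of_one_lt one_lt_two).atTop_mul_const (hR.trans_lt hz)
  obtain ⟨n, hn⟩ := (htendsto.eventually_gt_atTop C).exists
  linarith [hC _ (mem_range_self n), two_pow_mul_norm_le_norm_iterate hg hz.le n]

theorem isBounded_range_iterate_iff (hg : ∀ z, R ≤ ‖z‖ → 2 * ‖z‖ ≤ ‖g z‖) (hR : 0 ≤ R)
    {z : E} : IsBounded (range fun n => g^[n] z) ↔ ∀ n, ‖g^[n] z‖ ≤ R := by
  refine ⟨fun hb n => ?_, fun h => (isBounded_closedBall (x := 0) (r := R)).subset ?_⟩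
  · by_contra! hn
    refine not_isBounded_range_iterate hg hR hn (hb.subset ?_)
    rintro _ ⟨m, rfl⟩
    exact ⟨m + n, Function.iterate_add_apply g m n z⟩
  · rintro _ ⟨n, rfl⟩
    exact mem_closedBall_zero_iff.2 (h n)

end Escape

section Topology

variable {X : Type*} [TopologicalSpace X]

theorem IsOpen.frontier_connectedComponentIn_subset [LocallyConnectedSpace X] {s : Set X}
    (hs : IsOpen s) (x : X) : frontier (connectedComponentIn s x) ⊆ sᶜ := by
  intro w hw hws
  rw [hs.connectedComponentIn.frontier_eq] at hw
  obtain ⟨u, huw, hux⟩ := mem_closure_iff.1 hw.1 _ hs.connectedComponentIn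
    (mem_connectedComponentIn hws)
  refine hw.2 ?_
  rw [connectedComponentIn_eq hux, ← connectedComponentIn_eq huw]
  exact mem_connectedComponentIn hws

theorem isPreconnected_of_connectedComponentIn_inter_nonempty {s t : Set X} (hts : t ⊆ s)
    (ht : IsPreconnected t) (hs : ∀ x ∈ s, (connectedComponentIn s x ∩ t).Nonempty) :
    IsPreconnected s := by
  rcases t.eq_empty_or_nonempty with rfl | ⟨a, ha⟩
  · convert isPreconnected_empty
    exact eq_empty_of_forall_notMem fun x hx => by simpa using hs x hx
  refine isPreconnected_of_forall a fun x hx => ⟨_, union_subset (connectedComponentIn_subset _ _)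
    hts, Or.inr ha, Or.inl (mem_connectedComponentIn hx), ?_⟩
  obtain ⟨b, hb⟩ := hs x hx
  exact isPreconnected_connectedComponentIn.union b hb.1 hb.2 ht

end Topology

theorem isPreconnected_setOf_lt_norm {E : Type*} [NormedAddCommGroup E] [NormedSpace ℝ E]
    (h : 1 < Module.rank ℝ E) {R : ℝ} (hR : 0 ≤ R) : IsPreconnected {z : E | R < ‖z‖} := by
  -- polar coordinates: the image of `sphere 0 1 × (R, ∞)` under `(u, t) ↦ t • u`
  have himage : (fun p : E × ℝ => p.2 • p.1) '' (sphere 0 1 ×ˢ Ioi R) = {z : E | R < ‖z‖} := by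
    ext z
    simp only [mem_image, mem_prod, mem_sphere_zero_iff_norm, mem_Ioi, Prod.exists, mem_ofPred_eq]
    constructor
    · rintro ⟨u, t, ⟨hu, ht⟩, rfl⟩
      rwa [norm_smul, hu, Real.norm_of_nonneg (hR.trans ht.le), mul_one]
    · intro hz
      have hz0 : ‖z‖ ≠ 0 := (hR.trans_lt hz).ne'
      refine ⟨‖z‖⁻¹ • z, ‖z‖, ⟨?_, hz⟩, ?_⟩
      · rw [norm_smul, norm_inv, norm_norm, inv_mul_cancel₀ hz0]
      · rw [smul_smul, mul_inv_cancel₀ hz0, one_smul]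
  rw [← himage]
  exact ((isPreconnected_sphere h 0 1).prod isPreconnected_Ioi).image _
    (continuous_snd.smul continuous_fst).continuousOn

section FilledJulia

variable {f : ℂ[X]}

theorem exists_forall_mem_filledJulia_iff (hf : 2 ≤ f.natDegree) :
    ∃ R, 0 ≤ R ∧ ∀ z, z ∈ filledJulia f ↔ ∀ n, ‖(fun w => f.eval w)^[n] z‖ ≤ R := by
  obtain ⟨r, -, hr⟩ :=
    hasBasis_cobounded_norm.eventually_iff.1 (eventually_two_mul_norm_le_norm_eval hf)
  exact ⟨max r 0, le_max_right r 0, fun z =>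
    isBounded_range_iterate_iff (fun w hw => hr (le_of_max_le_left hw)) (le_max_right r 0)⟩

theorem isClosed_filledJulia (hf : 2 ≤ f.natDegree) : IsClosed (filledJulia f) := by
  obtain ⟨R, -, hR⟩ := exists_forall_mem_filledJulia_iff hf
  have hK : filledJulia f = ⋂ n : ℕ, {z | ‖(fun w => f.eval w)^[n] z‖ ≤ R} := by
    ext z
    simp only [hR, mem_iInter, mem_ofPred_eq]
  rw [hK]
  exact isClosed_iInter fun n => isClosed_le (f.continuous.iterate n).norm continuous_const

theorem subset_filledJulia_of_frontier_subset (hf : 2 ≤ f.natDegree) {U : Set ℂ}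
    (hU : IsBounded U) (hfr : frontier U ⊆ filledJulia f) : U ⊆ filledJulia f := by
  obtain ⟨R, -, hR⟩ := exists_forall_mem_filledJulia_iff hf
  intro z hz
  rw [hR]
  intro n
  exact Complex.norm_le_of_forall_mem_frontier_norm_le hU
    (f.differentiable.iterate n).diffContOnCl (fun w hw => (hR w).1 (hfr hw) n)
    (subset_closure hz)

theorem not_isBounded_connectedComponentIn_compl_filledJulia (hf : 2 ≤ f.natDegree) {z : ℂ}
    (hz : z ∉ filledJulia f) : ¬IsBounded (connectedComponentIn (filledJulia f)ᶜ z) := fun hU =>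
  hz <| subset_filledJulia_of_frontier_subset hf hU
    (by simpa using (isClosed_filledJulia hf).isOpen_compl.frontier_connectedComponentIn_subset z)
    (mem_connectedComponentIn hz)

end FilledJulia

theorem stmt_2_general (q : ℕ) (hq : 2 ≤ q) (f : Polynomial ℂ)
    (hdeg : f.natDegree = q) :
    IsConnected (filledJulia f)ᶜ := by
  have hf : 2 ≤ f.natDegree := hdeg ▸ hq
  obtain ⟨R, hR0, hR⟩ := exists_forall_mem_filledJulia_iff hf
  have hA : {z : ℂ | R < ‖z‖} ⊆ (filledJulia f)ᶜ := fun z hz hzK =>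
    hz.not_ge (by simpa using (hR z).1 hzK 0)
  have hRA : ((R + 1 : ℝ) : ℂ) ∈ {z : ℂ | R < ‖z‖} := by
    rw [mem_ofPred_eq, Complex.norm_real, Real.norm_of_nonneg (by linarith)]
    linarith
  refine ⟨⟨_, hA hRA⟩, isPreconnected_of_connectedComponentIn_inter_nonempty hA
    (isPreconnected_setOf_lt_norm (by simp [Complex.rank_real_complex]) hR0) fun z hz => ?_⟩
  -- an unbounded component leaves the disc of radius `R`
  by_contra! hdisjoint
  refine not_isBounded_connectedComponentIn_compl_filledJulia hf hz
    ((isBounded_closedBall (x := 0) (r := R)).subset fun w hw => ?_)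
  simpa using fun hRw : R < ‖w‖ => hdisjoint.subset ⟨hw, hRw⟩

/-- For a monic polynomial of degree `q ≥ 2`, the complement of the filled Julia set
is connected. -/
theorem stmt_2 (q : ℕ) (hq : 2 ≤ q) (f : Polynomial ℂ)
    (hmonic : f.Monic) (hdeg : f.natDegree = q) :
    IsConnected (filledJulia f)ᶜ :=
  stmt_2_general q hq f hdeg
end

section
/- Let f be a monic complex polynomial of degree q ≥ 2 and let z ∈ ℂ. Then the forward orbit {f^[n](z) : n ∈ ℕ} is unbounded if and only if |f^[n](z)| → ∞ as n → ∞. In particular the complement of the filled Julia set K(f) coincides with the attracting basin of infinity. -/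
/-!
Outside a large disc a polynomial of degree at least two more than doubles the absolute
value: writing `f = g * X + c` with `deg g ≥ 1`, eventually `‖g z‖ ≥ 3` and `‖c‖ ≤ ‖z‖`.
Hence an orbit that ever leaves that disc grows at least like `2ⁿ`, while an orbit that
never leaves it is bounded.
-/

open Filter Polynomial

theorem Polynomial.exists_two_mul_norm_le_norm_eval {R : Type*} [NormedDivisionRing R]
    (f : R[X]) (hf : 2 ≤ f.natDegree) :
    ∃ r : ℝ, ∀ z : R, r ≤ ‖z‖ → 2 * ‖z‖ ≤ ‖f.eval z‖ := by
  have hdivX : 0 < f.divX.degree := by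
    rw [← natDegree_pos_iff_degree_pos, natDegree_divX_eq_natDegree_tsub_one]
    omega
  have hgrow : Tendsto (fun z : R => ‖f.divX.eval z‖) (comap norm atTop) atTop :=
    f.divX.tendsto_norm_atTop hdivX tendsto_comap
  have hlarge : ∀ᶠ z : R in comap norm atTop, 3 ≤ ‖f.divX.eval z‖ ∧ ‖f.coeff 0‖ ≤ ‖z‖ :=
    (hgrow.eventually_ge_atTop 3).and (tendsto_comap.eventually_ge_atTop _)
  obtain ⟨r, -, hr⟩ := (atTop_basis.comap norm).eventually_iff.mp hlarge
  refine ⟨r, fun z hz => ?_⟩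
  obtain ⟨hg, hc⟩ := hr (Set.mem_Ici.mpr hz)
  have hsplit : f.eval z = f.divX.eval z * z + f.coeff 0 := by
    conv_lhs => rw [← divX_mul_X_add f]
    simp only [eval_add, eval_mul_X, eval_C]
  calc 2 * ‖z‖ = 3 * ‖z‖ - ‖z‖ := by ring
    _ ≤ ‖f.divX.eval z‖ * ‖z‖ - ‖f.coeff 0‖ := by gcongr
    _ = ‖f.divX.eval z * z‖ - ‖-f.coeff 0‖ := by rw [norm_mul, norm_neg]
    _ ≤ ‖f.eval z‖ := by
      rw [hsplit]
      simpa using norm_sub_norm_le (f.divX.eval z * z) (-f.coeff 0)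

section EscapeToInfinity

variable {E : Type*} [SeminormedAddGroup E] {T : E → E} {r : ℝ}

theorem pow_two_mul_norm_le_norm_iterate (hr : 0 ≤ r)
    (hT : ∀ z, r ≤ ‖z‖ → 2 * ‖z‖ ≤ ‖T z‖) (n : ℕ) {z : E} (hz : r ≤ ‖z‖) :
    2 ^ n * ‖z‖ ≤ ‖T^[n] z‖ := by
  induction n generalizing z with
  | zero => simp
  | succ n ih =>
    have hTz : 2 * ‖z‖ ≤ ‖T z‖ := hT z hz
    calc 2 ^ (n + 1) * ‖z‖ = 2 ^ n * (2 * ‖z‖) := by ring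
      _ ≤ 2 ^ n * ‖T z‖ := by gcongr
      _ ≤ ‖T^[n + 1] z‖ := ih (by linarith [norm_nonneg z])

theorem tendsto_norm_iterate_atTop (hr : 0 < r)
    (hT : ∀ z, r ≤ ‖z‖ → 2 * ‖z‖ ≤ ‖T z‖) {z : E} (hz : r ≤ ‖z‖) :
    Tendsto (fun n => ‖T^[n] z‖) atTop atTop := by
  refine tendsto_atTop_mono (fun n => pow_two_mul_norm_le_norm_iterate hr.le hT n hz) ?_
  exact (tendsto_pow_atTop_atTop_of_one_lt one_lt_two).atTop_mul_const (hr.trans_le hz)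

theorem not_isBounded_orbit_iff_tendsto_norm_iterate
    (hT : ∃ r : ℝ, ∀ z, r ≤ ‖z‖ → 2 * ‖z‖ ≤ ‖T z‖) (z : E) :
    ¬ Bornology.IsBounded (Set.range fun n => T^[n] z) ↔
      Tendsto (fun n => ‖T^[n] z‖) atTop atTop := by
  obtain ⟨r, hr⟩ := hT
  have hr' : ∀ w, max r 1 ≤ ‖w‖ → 2 * ‖w‖ ≤ ‖T w‖ := fun w hw => hr w (le_of_max_le_left hw)
  simp only [isBounded_iff_forall_norm_le, Set.forall_mem_range, not_exists, not_forall, not_le]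
  constructor
  · intro hunbdd
    obtain ⟨N, hN⟩ := hunbdd (max r 1)
    rw [← tendsto_add_atTop_iff_nat N]
    simpa only [Function.iterate_add_apply] using
      tendsto_norm_iterate_atTop (by positivity) hr' hN.le
  · intro htends C
    exact (htends.eventually_gt_atTop C).exists

end EscapeToInfinity

theorem stmt_3_general (q : ℕ) (hq : 2 ≤ q) (f : Polynomial ℂ)
    (hdeg : f.natDegree = q) :
    (∀ z : ℂ,
      ¬ Bornology.IsBounded (Set.range fun n : ℕ => (fun w : ℂ => f.eval w)^[n] z) ↔
        Filter.Tendsto (fun n : ℕ => ‖(fun w : ℂ => f.eval w)^[n] z‖)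
          Filter.atTop Filter.atTop) ∧
    (filledJulia f)ᶜ =
      {z : ℂ | Filter.Tendsto (fun n : ℕ => ‖(fun w : ℂ => f.eval w)^[n] z‖)
          Filter.atTop Filter.atTop} := by
  have hescape := f.exists_two_mul_norm_le_norm_eval (hdeg ▸ hq)
  have horbit := not_isBounded_orbit_iff_tendsto_norm_iterate hescape
  exact ⟨horbit, Set.ext horbit⟩

/-- For a monic polynomial of degree `q ≥ 2`, the forward orbit of a point is unbounded
iff the iterates tend to infinity in absolute value; in particular the complement of the
filled Julia set is the attracting basin of infinity. -/
theorem stmt_3 (q : ℕ) (hq : 2 ≤ q) (f : Polynomial ℂ)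
    (hmonic : f.Monic) (hdeg : f.natDegree = q) :
    (∀ z : ℂ,
      ¬ Bornology.IsBounded (Set.range fun n : ℕ => (fun w : ℂ => f.eval w)^[n] z) ↔
        Filter.Tendsto (fun n : ℕ => ‖(fun w : ℂ => f.eval w)^[n] z‖)
          Filter.atTop Filter.atTop) ∧
    (filledJulia f)ᶜ =
      {z : ℂ | Filter.Tendsto (fun n : ℕ => ‖(fun w : ℂ => f.eval w)^[n] z‖)
          Filter.atTop Filter.atTop} :=
  stmt_3_general q hq f hdeg
end

section
/- (Böttcher's theorem near infinity.) Let f be a monic complex polynomial of degree q ≥ 2. Then there exist R > 0 and a function φ : ℂ → ℂ that is analytic and injective on the set {z : |z| > R}, such that |f(z)| > R whenever |z| > R, φ(f(z)) = (φ(z))^q for all z with |z| > R, and φ(z)/z → 1 as |z| → ∞. -/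
/-!
The Böttcher map is `φ z = lim (F^[n] z) ^ (1 / q ^ n)`. Its logarithm telescopes into
`log z + ∑ₙ q⁻⁽ⁿ⁺¹⁾ log (F (F^[n] z) / (F^[n] z) ^ q)`; since `F z = z ^ q (1 + O(1 / z))` and
the iterates escape, the `n`-th term is `O(2⁻ⁿ / ‖z‖)`, so the series converges locally uniformly
near infinity and `φ z / z → 1`. Shifting the series gives `φ ∘ F = φ ^ q`. Finally `φ z - z` is
bounded, and a bounded holomorphic perturbation of the identity is injective far out.
-/

open Complex Polynomial Filter Set Metric

theorem Polynomial.Monic.norm_eval_sub_X_pow_le {𝕜 : Type*} [NormedField 𝕜] {f : 𝕜[X]}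
    (hf : f.Monic) {z : 𝕜} (hz : 1 ≤ ‖z‖) :
    ‖f.eval z - z ^ f.natDegree‖ ≤
      (∑ i ∈ Finset.range f.natDegree, ‖f.coeff i‖) * ‖z‖ ^ (f.natDegree - 1) := by
  rw [eval_eq_sum_range, Finset.sum_range_succ, hf.coeff_natDegree, one_mul,
    add_sub_cancel_right, Finset.sum_mul]
  refine (norm_sum_le _ _).trans (Finset.sum_le_sum fun i hi => ?_)
  rw [norm_mul, norm_pow]
  have := Finset.mem_range.mp hi
  gcongr ‖f.coeff i‖ * ?_
  exact pow_le_pow_right₀ hz (by omega)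

theorem norm_deriv_le_of_forall_norm_le {ψ : ℂ → ℂ} {r M : ℝ}
    (hψ : DifferentiableOn ℂ ψ {z | r < ‖z‖}) (hM : ∀ z, r < ‖z‖ → ‖ψ z‖ ≤ M) {c : ℂ}
    (hc : r < ‖c‖) : ‖deriv ψ c‖ ≤ 2 * M / (‖c‖ - r) := by
  have hball : ball c (‖c‖ - r) ⊆ {z | r < ‖z‖} := fun w hw => by
    have := norm_sub_norm_le c w
    rw [mem_ball, dist_eq, norm_sub_rev] at hw
    simp only [mem_ofPred_eq]
    linarith
  refine norm_deriv_le_div_of_mapsTo_ball (hψ.mono hball) (fun w hw => ?_) (by linarith)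
  rw [mem_closedBall, dist_eq, two_mul]
  exact (norm_sub_le _ _).trans (add_le_add (hM w (hball hw)) (hM c hc))

/-- Nearby points are separated because `ψ` is `1/2`-Lipschitz there (Cauchy estimate), distant
ones because `ψ` moves points by at most `M`. -/
theorem injOn_add_of_forall_norm_le {ψ : ℂ → ℂ} {r M : ℝ} (hr : 0 ≤ r)
    (hψ : DifferentiableOn ℂ ψ {z | r < ‖z‖}) (hM : ∀ z, r < ‖z‖ → ‖ψ z‖ ≤ M) :
    InjOn (fun z => z + ψ z) {z | 2 * r + 8 * M < ‖z‖} := by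
  have hM₀ : 0 ≤ M := (norm_nonneg _).trans (hM ((r + 1 : ℝ) : ℂ) (by
    rw [norm_real, Real.norm_of_nonneg (by linarith)]; linarith))
  intro z₁ hz₁ z₂ hz₂ heq
  simp only [mem_ofPred_eq] at hz₁ hz₂ heq
  have hψ₁₂ : ψ z₂ - ψ z₁ = -(z₂ - z₁) := by linear_combination -heq
  rcases le_or_gt ‖z₂ - z₁‖ (‖z₁‖ / 2) with hclose | hfar
  · have hseg : ∀ x ∈ segment ℝ z₁ z₂, r + 4 * M < ‖x‖ := fun x hx => by
      have hx : x ∈ closedBall z₁ ‖z₂ - z₁‖ := (convex_closedBall z₁ _).segment_subset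
        (mem_closedBall_self (norm_nonneg _)) (by rw [mem_closedBall, dist_eq]) hx
      rw [mem_closedBall, dist_eq] at hx
      have := norm_sub_norm_le z₁ x
      rw [norm_sub_rev] at this
      linarith
    have hlip := (convex_segment z₁ z₂).norm_image_sub_le_of_norm_deriv_le (C := 1 / 2)
      (fun x hx => hψ.differentiableAt (isOpen_lt continuous_const continuous_norm |>.mem_nhds
        (show r < ‖x‖ by linarith [hseg x hx])))
      (fun x hx => (norm_deriv_le_of_forall_norm_le hψ hM (by linarith [hseg x hx])).trans
        (by rw [div_le_iff₀ (by linarith [hseg x hx])]; linarith [hseg x hx]))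
      (left_mem_segment ℝ z₁ z₂) (right_mem_segment ℝ z₁ z₂)
    rw [hψ₁₂, norm_neg] at hlip
    exact (sub_eq_zero.mp (norm_eq_zero.mp (by linarith [norm_nonneg (z₂ - z₁)]))).symm
  · have := norm_sub_le (ψ z₂) (ψ z₁)
    rw [hψ₁₂, norm_neg] at this
    linarith [hM z₁ (by linarith), hM z₂ (by linarith)]

structure IsNearPow (F : ℂ → ℂ) (q : ℕ) (C : ℝ) : Prop where
  differentiable : Differentiable ℂ F
  two_le : 2 ≤ q
  one_le : 1 ≤ C
  norm_div_pow_sub_one_le : ∀ z : ℂ, 8 * C < ‖z‖ → ‖F z / z ^ q - 1‖ ≤ C / ‖z‖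

noncomputable def logRatio (F : ℂ → ℂ) (q : ℕ) (z : ℂ) : ℂ := log (F z / z ^ q)

noncomputable def boettcherLog (F : ℂ → ℂ) (q : ℕ) (z : ℂ) : ℂ :=
  ∑' n : ℕ, logRatio F q (F^[n] z) / (q : ℂ) ^ (n + 1)

noncomputable def boettcher (F : ℂ → ℂ) (q : ℕ) (z : ℂ) : ℂ := z * exp (boettcherLog F q z)

namespace IsNearPow

variable {F : ℂ → ℂ} {q : ℕ} {C : ℝ} (H : IsNearPow F q C) {z : ℂ}
include H

theorem div_norm_lt (hz : 8 * C < ‖z‖) : C / ‖z‖ < 1 / 8 := by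
  rw [div_lt_iff₀ (by linarith [H.one_le])]
  linarith

theorem ne_zero (hz : 8 * C < ‖z‖) : z ≠ 0 :=
  norm_pos_iff.mp (by linarith [H.one_le])

theorem norm_le_norm_apply (hz : 8 * C < ‖z‖) : ‖z‖ ≤ ‖F z‖ := by
  have hratio : 7 / 8 ≤ ‖F z / z ^ q‖ := by
    have := norm_sub_norm_le (1 : ℂ) (1 - F z / z ^ q)
    rw [sub_sub_cancel, norm_one, norm_sub_rev] at this
    linarith [H.norm_div_pow_sub_one_le z hz, H.div_norm_lt hz]
  have hpow : 8 * ‖z‖ ≤ ‖z‖ ^ q := calc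
    8 * ‖z‖ ≤ ‖z‖ ^ 2 := by nlinarith [H.one_le]
    _ ≤ ‖z‖ ^ q := pow_le_pow_right₀ (by linarith [H.one_le]) H.two_le
  rw [norm_div, norm_pow, le_div_iff₀ (by positivity [H.ne_zero hz])] at hratio
  nlinarith [norm_nonneg z]

theorem norm_le_norm_iterate (hz : 8 * C < ‖z‖) (n : ℕ) : ‖z‖ ≤ ‖F^[n] z‖ := by
  induction n with
  | zero => exact le_rfl
  | succ n ih =>
    rw [Function.iterate_succ_apply']
    exact ih.trans (H.norm_le_norm_apply (hz.trans_le ih))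

theorem norm_logRatio_le (hz : 8 * C < ‖z‖) : ‖logRatio F q z‖ ≤ 2 * C / ‖z‖ := by
  have hsmall := H.norm_div_pow_sub_one_le z hz
  have hlog := norm_log_one_add_half_le_self (hsmall.trans (by linarith [H.div_norm_lt hz]))
  rw [add_sub_cancel] at hlog
  refine hlog.trans ?_
  rw [mul_div_assoc]
  linarith [div_nonneg (by linarith [H.one_le] : 0 ≤ C) (norm_nonneg z)]

theorem differentiableAt_logRatio (hz : 8 * C < ‖z‖) : DifferentiableAt ℂ (logRatio F q) z := by
  refine ((H.differentiable z).div (differentiableAt_pow q) (pow_ne_zero q (H.ne_zero hz))).clog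
    (ball_one_subset_slitPlane ?_)
  rw [Pi.div_apply, mem_ball, dist_eq]
  linarith [H.norm_div_pow_sub_one_le z hz, H.div_norm_lt hz]

theorem norm_logRatio_iterate_div_le (hz : 8 * C < ‖z‖) (n : ℕ) :
    ‖logRatio F q (F^[n] z) / (q : ℂ) ^ (n + 1)‖ ≤ 2 * C / ‖z‖ / 2 / 2 ^ n := by
  have hn := H.norm_le_norm_iterate hz n
  have hz₀ : 0 < ‖z‖ := by linarith [H.one_le]
  have hC₀ : 0 ≤ 2 * C / ‖z‖ := div_nonneg (by linarith [H.one_le]) hz₀.le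
  rw [div_div, ← pow_succ', norm_div, norm_pow, norm_natCast]
  calc ‖logRatio F q (F^[n] z)‖ / (q : ℝ) ^ (n + 1)
      ≤ 2 * C / ‖z‖ / (q : ℝ) ^ (n + 1) := by
        gcongr
        refine (H.norm_logRatio_le (hz.trans_le hn)).trans ?_
        gcongr
        linarith [H.one_le]
    _ ≤ 2 * C / ‖z‖ / 2 ^ (n + 1) := by
        gcongr
        exact_mod_cast H.two_le

theorem differentiableOn_boettcherLog :
    DifferentiableOn ℂ (boettcherLog F q) {z | 8 * C < ‖z‖} := by
  refine differentiableOn_tsum_of_summable_norm summable_geometric_two (fun n w hw => ?_)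
    (isOpen_lt continuous_const continuous_norm) (fun n w hw => ?_)
  · exact (((H.differentiableAt_logRatio (hw.trans_le (H.norm_le_norm_iterate hw n))).comp w
      ((H.differentiable.iterate n) w)).div_const _).differentiableWithinAt
  · refine (H.norm_logRatio_iterate_div_le hw n).trans ?_
    rw [one_div_pow, div_div]
    gcongr
    · rw [mul_div_assoc]
      linarith [H.div_norm_lt hw]
    · exact le_mul_of_one_le_left (by positivity) one_le_two

theorem norm_boettcherLog_le (hz : 8 * C < ‖z‖) : ‖boettcherLog F q z‖ ≤ 2 * C / ‖z‖ :=
  tsum_of_norm_bounded (hasSum_geometric_two' _) (H.norm_logRatio_iterate_div_le hz)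

theorem mul_boettcherLog (hz : 8 * C < ‖z‖) :
    q * boettcherLog F q z = logRatio F q z + boettcherLog F q (F z) := by
  have hsum : Summable fun n => logRatio F q (F^[n] z) / (q : ℂ) ^ (n + 1) :=
    .of_norm_bounded (hasSum_geometric_two' _).summable (H.norm_logRatio_iterate_div_le hz)
  have hq : (q : ℂ) ≠ 0 := by exact_mod_cast (by linarith [H.two_le] : q ≠ 0)
  rw [boettcherLog, ← tsum_mul_left, (hsum.mul_left _).tsum_eq_zero_add, boettcherLog]
  congr 1
  · field_simp
    simp
  · refine tsum_congr fun n => ?_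
    rw [Function.iterate_succ_apply]
    field_simp
    ring

theorem boettcher_apply (hz : 8 * C < ‖z‖) : boettcher F q (F z) = boettcher F q z ^ q := by
  have hFz : F z ≠ 0 := H.ne_zero (hz.trans_le (H.norm_le_norm_apply hz))
  have hzq : z ^ q ≠ 0 := pow_ne_zero q (H.ne_zero hz)
  rw [boettcher, boettcher, mul_pow, ← exp_nat_mul, H.mul_boettcherLog hz, exp_add, logRatio,
    exp_log (div_ne_zero hFz hzq)]
  field_simp

theorem norm_boettcher_sub_le (hz : 8 * C < ‖z‖) : ‖boettcher F q z - z‖ ≤ 4 * C := by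
  have hz₀ : 0 < ‖z‖ := by linarith [H.one_le]
  have hlog := H.norm_boettcherLog_le hz
  have hexp := norm_exp_sub_one_le <|
    hlog.trans (by rw [mul_div_assoc]; linarith [H.div_norm_lt hz])
  rw [boettcher, ← mul_sub_one, norm_mul]
  calc ‖z‖ * ‖exp (boettcherLog F q z) - 1‖ ≤ ‖z‖ * (2 * (2 * C / ‖z‖)) := by gcongr; linarith
    _ = 4 * C := by field_simp; ring

theorem tendsto_boettcher_div :
    Tendsto (fun z => boettcher F q z / z) (comap (fun z : ℂ => ‖z‖) atTop) (nhds 1) := by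
  have hnorm : Tendsto (fun z : ℂ => ‖z‖) (comap (fun z : ℂ => ‖z‖) atTop) atTop := tendsto_comap
  have hfar : ∀ᶠ z : ℂ in comap (fun z : ℂ => ‖z‖) atTop, 8 * C < ‖z‖ :=
    hnorm.eventually (eventually_gt_atTop _)
  have hlog : Tendsto (boettcherLog F q) (comap (fun z : ℂ => ‖z‖) atTop) (nhds 0) :=
    squeeze_zero_norm' (hfar.mono fun z hz => H.norm_boettcherLog_le hz)
      (tendsto_const_nhds.div_atTop hnorm)
  have hexp : Tendsto (fun z => exp (boettcherLog F q z)) (comap (fun z : ℂ => ‖z‖) atTop)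
      (nhds 1) := by
    simpa [Function.comp_def] using (continuous_exp.tendsto 0).comp hlog
  refine hexp.congr' ?_
  filter_upwards [hfar] with z hz
  rw [boettcher, mul_div_cancel_left₀ _ (H.ne_zero hz)]

theorem differentiableOn_boettcher :
    DifferentiableOn ℂ (boettcher F q) {z | 8 * C < ‖z‖} :=
  differentiableOn_id.mul H.differentiableOn_boettcherLog.cexp

theorem injOn_boettcher : InjOn (boettcher F q) {z | 48 * C < ‖z‖} := by
  have hinj := injOn_add_of_forall_norm_le (by linarith [H.one_le])
    (H.differentiableOn_boettcher.sub differentiableOn_id) fun z hz => H.norm_boettcher_sub_le hz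
  refine (hinj.congr fun z _ => add_sub_cancel z _).mono fun z hz => ?_
  simp only [mem_ofPred_eq] at hz ⊢
  linarith

end IsNearPow

theorem Polynomial.Monic.isNearPow {f : ℂ[X]} (hf : f.Monic) (hq : 2 ≤ f.natDegree) :
    IsNearPow (fun z => f.eval z) f.natDegree
      (1 + ∑ i ∈ Finset.range f.natDegree, ‖f.coeff i‖) where
  differentiable := f.differentiable
  two_le := hq
  one_le := le_add_of_nonneg_right (Finset.sum_nonneg fun _ _ => norm_nonneg _)
  norm_div_pow_sub_one_le z hz := by
    have hsum : 0 ≤ ∑ i ∈ Finset.range f.natDegree, ‖f.coeff i‖ :=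
      Finset.sum_nonneg fun _ _ => norm_nonneg _
    have hz₁ : 1 ≤ ‖z‖ := by linarith
    have hz₀ : z ≠ 0 := norm_pos_iff.mp (by linarith)
    rw [div_sub_one (pow_ne_zero _ hz₀), norm_div, norm_pow,
      div_le_div_iff₀ (by positivity) (by positivity)]
    calc ‖f.eval z - z ^ f.natDegree‖ * ‖z‖
        ≤ (∑ i ∈ Finset.range f.natDegree, ‖f.coeff i‖) * ‖z‖ ^ (f.natDegree - 1) * ‖z‖ := by
          gcongr
          exact hf.norm_eval_sub_X_pow_le hz₁
      _ ≤ (1 + ∑ i ∈ Finset.range f.natDegree, ‖f.coeff i‖) * ‖z‖ ^ f.natDegree := by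
          rw [mul_assoc, ← pow_succ, Nat.sub_add_cancel (by omega)]
          gcongr
          linarith

/-- Böttcher's theorem near infinity: a monic polynomial of degree `q ≥ 2` is
holomorphically conjugate to `z ↦ z^q` near infinity, by a map tangent to the
identity at infinity. -/
theorem stmt_4 (q : ℕ) (hq : 2 ≤ q) (f : Polynomial ℂ)
    (hmonic : f.Monic) (hdeg : f.natDegree = q) :
    ∃ R : ℝ, 0 < R ∧ ∃ φ : ℂ → ℂ,
      AnalyticOnNhd ℂ φ {z : ℂ | R < ‖z‖} ∧
      Set.InjOn φ {z : ℂ | R < ‖z‖} ∧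
      (∀ z : ℂ, R < ‖z‖ → R < ‖f.eval z‖) ∧
      (∀ z : ℂ, R < ‖z‖ → φ (f.eval z) = (φ z) ^ q) ∧
      Filter.Tendsto (fun z : ℂ => φ z / z)
        (Filter.comap (fun z : ℂ => ‖z‖) Filter.atTop) (nhds 1) := by
  subst hdeg
  have H := hmonic.isNearPow hq
  set C := 1 + ∑ i ∈ Finset.range f.natDegree, ‖f.coeff i‖
  have hfar : ∀ z : ℂ, 48 * C < ‖z‖ → 8 * C < ‖z‖ := fun z hz => by linarith [H.one_le]
  refine ⟨48 * C, by linarith [H.one_le], boettcher (fun z => f.eval z) f.natDegree,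
    (H.differentiableOn_boettcher.mono hfar).analyticOnNhd
      (isOpen_lt continuous_const continuous_norm),
    H.injOn_boettcher, fun z hz => hz.trans_le (H.norm_le_norm_apply (hfar z hz)),
    fun z hz => H.boettcher_apply (hfar z hz), H.tendsto_boettcher_div⟩
end

section
/- (Uniqueness of the normalized Böttcher coordinate.) Let f be a monic complex polynomial of degree q ≥ 2 and let R > 0 be such that |f(z)| > R whenever |z| > R. Suppose φ₁ and φ₂ are both analytic on {z : |z| > R}, satisfy φᵢ(f(z)) = (φᵢ(z))^q for all |z| > R, and satisfy φᵢ(z)/z → 1 as |z| → ∞. Then there exists R' ≥ R such that φ₁(z) = φ₂(z) for all z with |z| > R'. -/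
/-!
Put `ψ = φ₁ / φ₂`. Near infinity `ψ` is analytic, tends to `1`, and satisfies
`ψ ∘ f = ψ ^ q`; since `deg f ≥ 2`, `f` maps a neighbourhood `{R' < ‖z‖}` of infinity into
itself, so `‖ψ z‖ ^ q ^ n = ‖ψ (f^[n] z)‖` stays between `1/2` and `2` for all `n`, which forces
`‖ψ z‖ = 1`. By the maximum modulus principle on the connected set `{R' < ‖z‖}`, `ψ` is constant
there, and its limit at infinity shows that the constant is `1`.
-/

open Filter Set Bornology Topology Polynomial

lemma Complex.isPreconnected_setOf_lt_norm {r : ℝ} (hr : 0 < r) :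
    IsPreconnected {z : ℂ | r < ‖z‖} := by
  have hexp : Complex.exp '' {w : ℂ | Real.log r < w.re} = {z : ℂ | r < ‖z‖} := by
    ext z
    simp only [mem_image, mem_ofPred_eq]
    constructor
    · rintro ⟨w, hw, rfl⟩
      rw [Complex.norm_exp, ← Real.exp_log hr]
      exact Real.exp_lt_exp.mpr hw
    · intro hz
      have hz0 : z ≠ 0 := norm_pos_iff.mp (hr.trans hz)
      refine ⟨Complex.log z, ?_, Complex.exp_log hz0⟩
      rw [Complex.log_re]
      exact Real.log_lt_log hr hz
  rw [← hexp]
  exact (convex_halfSpace_re_gt _).isPreconnected.image _ Complex.continuous_exp.continuousOn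

lemma Polynomial.eventually_norm_lt_norm_eval {𝕜 : Type*} [NormedField 𝕜] {p : 𝕜[X]}
    (hp : 2 ≤ p.natDegree) : ∀ᶠ z in cobounded 𝕜, ‖z‖ < ‖p.eval z‖ := by
  have hdivX : 0 < p.divX.degree := by
    rw [← natDegree_pos_iff_degree_pos, natDegree_divX_eq_natDegree_tsub_one]
    omega
  have hlarge : ∀ᶠ z in cobounded 𝕜, ‖p.coeff 0‖ + 2 ≤ ‖p.divX.eval z‖ :=
    (p.divX.tendsto_norm_atTop hdivX tendsto_norm_cobounded_atTop).eventually_ge_atTop _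
  filter_upwards [hlarge, tendsto_norm_cobounded_atTop.eventually_ge_atTop 1] with z hlarge hz
  have hsplit : p.eval z = p.divX.eval z * z + p.coeff 0 := by
    conv_lhs => rw [← divX_mul_X_add p]
    simp
  have htri : ‖p.divX.eval z‖ * ‖z‖ - ‖p.coeff 0‖ ≤ ‖p.eval z‖ := by
    simpa [hsplit] using norm_sub_norm_le (p.divX.eval z * z) (-p.coeff 0)
  nlinarith [norm_nonneg (p.coeff 0)]

lemma apply_iterate_eq_pow_pow {α M : Type*} [Monoid M] {g : α → α} {s : Set α} {ψ : α → M}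
    {q : ℕ} (hg : MapsTo g s s) (hψ : ∀ z ∈ s, ψ (g z) = ψ z ^ q) {z : α} (hz : z ∈ s) (n : ℕ) :
    ψ (g^[n] z) = ψ z ^ q ^ n := by
  induction n with
  | zero => simp
  | succ n ih =>
    rw [Function.iterate_succ_apply', hψ _ (hg.iterate n hz), ih, ← pow_mul, pow_succ]

lemma le_one_of_forall_pow_pow_le {q : ℕ} (hq : 1 < q) {r C : ℝ} (h : ∀ n : ℕ, r ^ q ^ n ≤ C) :
    r ≤ 1 := by
  by_contra! hr
  obtain ⟨n, hn⟩ := pow_unbounded_of_one_lt C hr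
  have hmono : r ^ n ≤ r ^ q ^ n := pow_le_pow_right₀ hr.le (Nat.lt_pow_self hq).le
  linarith [h n]

lemma norm_eq_one_of_apply_eq_pow {α 𝕜 : Type*} [NormedDivisionRing 𝕜] {g : α → α}
    {s : Set α} {ψ : α → 𝕜} {q : ℕ} (hq : 1 < q) (hg : MapsTo g s s)
    (hψ : ∀ z ∈ s, ψ (g z) = ψ z ^ q) (hbdd : ∀ z ∈ s, 2⁻¹ < ‖ψ z‖ ∧ ‖ψ z‖ < 2) {z : α}
    (hz : z ∈ s) : ‖ψ z‖ = 1 := by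
  have horbit (n : ℕ) : 2⁻¹ < ‖ψ z‖ ^ q ^ n ∧ ‖ψ z‖ ^ q ^ n < 2 := by
    rw [← norm_pow, ← apply_iterate_eq_pow_pow hg hψ hz n]
    exact hbdd _ (hg.iterate n hz)
  have hpos : 0 < ‖ψ z‖ := by
    have h0 := (horbit 0).1
    rw [pow_zero, pow_one] at h0
    linarith
  have hle : ‖ψ z‖ ≤ 1 := le_one_of_forall_pow_pow_le hq fun n ↦ (horbit n).2.le
  have hge : ‖ψ z‖⁻¹ ≤ 1 := le_one_of_forall_pow_pow_le hq (C := 2) fun n ↦ by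
    rw [inv_pow]
    exact inv_le_of_inv_le₀ (by norm_num) (horbit n).1.le
  exact le_antisymm hle ((inv_le_one₀ hpos).mp hge)

lemma tendsto_div_cobounded_of_tendsto_div_id {𝕜 : Type*} [NormedField 𝕜] {φ₁ φ₂ : 𝕜 → 𝕜}
    (h₁ : Tendsto (fun z ↦ φ₁ z / z) (cobounded 𝕜) (𝓝 1))
    (h₂ : Tendsto (fun z ↦ φ₂ z / z) (cobounded 𝕜) (𝓝 1)) :
    Tendsto (fun z ↦ φ₁ z / φ₂ z) (cobounded 𝕜) (𝓝 1) := by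
  have hratio := h₁.div h₂ one_ne_zero
  rw [div_one] at hratio
  refine hratio.congr' ?_
  filter_upwards [tendsto_norm_cobounded_atTop.eventually_gt_atTop 0] with z hz
  exact div_div_div_cancel_right₀ (norm_pos_iff.mp hz) _ _

lemma Complex.eqOn_one_of_norm_eq_one_of_tendsto_cobounded {r : ℝ} (hr : 0 < r) {ψ : ℂ → ℂ}
    (hd : DifferentiableOn ℂ ψ {z | r < ‖z‖}) (hnorm : ∀ z, r < ‖z‖ → ‖ψ z‖ = 1)
    (hlim : Tendsto ψ (cobounded ℂ) (𝓝 1)) : EqOn ψ 1 {z | r < ‖z‖} := by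
  have hU : {z : ℂ | r < ‖z‖} ∈ cobounded ℂ :=
    tendsto_norm_cobounded_atTop.eventually_gt_atTop r
  obtain ⟨c, hc⟩ := (cobounded ℂ).nonempty_of_mem hU
  have hconst : EqOn ψ (Function.const ℂ (ψ c)) {z | r < ‖z‖} :=
    Complex.eqOn_of_isPreconnected_of_isMaxOn_norm (Complex.isPreconnected_setOf_lt_norm hr)
      (isOpen_lt continuous_const continuous_norm) hd hc
      fun z hz ↦ by simp [hnorm z hz, hnorm c hc]
  have hc1 : ψ c = 1 :=
    tendsto_nhds_unique (tendsto_const_nhds.congr' (eventuallyEq_of_mem hU hconst).symm) hlim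
  rwa [hc1] at hconst

theorem stmt_5_general (q : ℕ) (hq : 2 ≤ q) (f : Polynomial ℂ)
    (hdeg : f.natDegree = q)
    (R : ℝ)
    (φ₁ φ₂ : ℂ → ℂ)
    (h₁ : AnalyticOnNhd ℂ φ₁ {z : ℂ | R < ‖z‖})
    (h₂ : AnalyticOnNhd ℂ φ₂ {z : ℂ | R < ‖z‖})
    (hfun₁ : ∀ z : ℂ, R < ‖z‖ → φ₁ (f.eval z) = (φ₁ z) ^ q)
    (hfun₂ : ∀ z : ℂ, R < ‖z‖ → φ₂ (f.eval z) = (φ₂ z) ^ q)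
    (htan₁ : Filter.Tendsto (fun z : ℂ => φ₁ z / z)
      (Filter.comap (fun z : ℂ => ‖z‖) Filter.atTop) (nhds 1))
    (htan₂ : Filter.Tendsto (fun z : ℂ => φ₂ z / z)
      (Filter.comap (fun z : ℂ => ‖z‖) Filter.atTop) (nhds 1)) :
    ∃ R' : ℝ, R ≤ R' ∧ ∀ z : ℂ, R' < ‖z‖ → φ₁ z = φ₂ z := by
  rw [comap_norm_atTop] at htan₁ htan₂
  set ψ : ℂ → ℂ := fun z ↦ φ₁ z / φ₂ z
  have hψ : Tendsto ψ (cobounded ℂ) (𝓝 1) := tendsto_div_cobounded_of_tendsto_div_id htan₁ htan₂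
  have hφ₂ : ∀ᶠ z in cobounded ℂ, φ₂ z ≠ 0 :=
    (htan₂.eventually_ne one_ne_zero).mono fun z hz h0 ↦ hz (by simp [h0])
  have hψbdd : ∀ᶠ z in cobounded ℂ, 2⁻¹ < ‖ψ z‖ ∧ ‖ψ z‖ < 2 :=
    hψ.norm (Ioo_mem_nhds (by norm_num) (by norm_num))
  obtain ⟨M, -, hM⟩ := hasBasis_cobounded_norm.eventually_iff.mp
    ((f.eventually_norm_lt_norm_eval (hdeg ▸ hq)).and (hφ₂.and hψbdd))
  set R' := max (max R M) 1
  have hR' (z : ℂ) (hz : R' < ‖z‖) : R < ‖z‖ ∧ M ≤ ‖z‖ := by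
    constructor <;> linarith [le_max_left (max R M) 1, le_max_left R M, le_max_right R M]
  have hmaps : MapsTo f.eval {z | R' < ‖z‖} {z | R' < ‖z‖} :=
    fun z hz ↦ hz.trans (hM (hR' z hz).2).1
  have hψfun : ∀ z ∈ {z : ℂ | R' < ‖z‖}, ψ (f.eval z) = ψ z ^ q := fun z hz ↦ by
    simp only [ψ, hfun₁ z (hR' z hz).1, hfun₂ z (hR' z hz).1, div_pow]
  have hnorm (z : ℂ) (hz : R' < ‖z‖) : ‖ψ z‖ = 1 :=
    norm_eq_one_of_apply_eq_pow hq hmaps hψfun (fun w hw ↦ (hM (hR' w hw).2).2.2) hz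
  have hd : DifferentiableOn ℂ ψ {z | R' < ‖z‖} := fun z hz ↦
    ((h₁ z (hR' z hz).1).div (h₂ z (hR' z hz).1) (hM (hR' z hz).2).2.1).differentiableAt
      |>.differentiableWithinAt
  refine ⟨R', (le_max_left R M).trans (le_max_left _ 1), fun z hz ↦ ?_⟩
  have hψ1 : ψ z = 1 := Complex.eqOn_one_of_norm_eq_one_of_tendsto_cobounded
    (zero_lt_one.trans_le (le_max_right _ 1)) hd hnorm hψ hz
  exact (div_eq_one_iff_eq (hM (hR' z hz).2).2.1).mp hψ1

/-- Uniqueness of the normalized Böttcher coordinate: two analytic solutions of the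
Böttcher functional equation tangent to the identity at infinity agree near infinity. -/
theorem stmt_5 (q : ℕ) (hq : 2 ≤ q) (f : Polynomial ℂ)
    (hmonic : f.Monic) (hdeg : f.natDegree = q)
    (R : ℝ) (hR : 0 < R) (hfR : ∀ z : ℂ, R < ‖z‖ → R < ‖f.eval z‖)
    (φ₁ φ₂ : ℂ → ℂ)
    (h₁ : AnalyticOnNhd ℂ φ₁ {z : ℂ | R < ‖z‖})
    (h₂ : AnalyticOnNhd ℂ φ₂ {z : ℂ | R < ‖z‖})
    (hfun₁ : ∀ z : ℂ, R < ‖z‖ → φ₁ (f.eval z) = (φ₁ z) ^ q)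
    (hfun₂ : ∀ z : ℂ, R < ‖z‖ → φ₂ (f.eval z) = (φ₂ z) ^ q)
    (htan₁ : Filter.Tendsto (fun z : ℂ => φ₁ z / z)
      (Filter.comap (fun z : ℂ => ‖z‖) Filter.atTop) (nhds 1))
    (htan₂ : Filter.Tendsto (fun z : ℂ => φ₂ z / z)
      (Filter.comap (fun z : ℂ => ‖z‖) Filter.atTop) (nhds 1)) :
    ∃ R' : ℝ, R ≤ R' ∧ ∀ z : ℂ, R' < ‖z‖ → φ₁ z = φ₂ z :=
  stmt_5_general q hq f hdeg R φ₁ φ₂ h₁ h₂ hfun₁ hfun₂ htan₁ htan₂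
end

section
/- Let f be a monic complex polynomial of degree q ≥ 2. For every z ∈ ℂ the limit g(z) := lim_{n→∞} q^{-n} · log⁺|f^[n](z)| exists (where log⁺ t = max(log t, 0)). The resulting function g : ℂ → ℝ is continuous, satisfies g(f(z)) = q·g(z) for all z, vanishes exactly on the filled Julia set K(f) and is strictly positive off K(f), and satisfies g(z) − log|z| → 0 as |z| → ∞. -/
open Filter Topology Bornology Set Real

section EscapeRate

variable {X : Type*} (φ : X → X) (h : X → ℝ) (q : ℝ)

noncomputable def escapeApprox (n : ℕ) (x : X) : ℝ := (q ^ n)⁻¹ * h (φ^[n] x)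

/-- Junk (`limUnder`) unless the sequence converges; the lemmas below all provide convergence. -/
noncomputable def escapeRate (x : X) : ℝ := limUnder atTop fun n ↦ escapeApprox φ h q n x

variable {φ h q}

lemma escapeApprox_zero (x : X) : escapeApprox φ h q 0 x = h x := by
  simp [escapeApprox]

lemma escapeApprox_map_eq_mul_succ (hq : q ≠ 0) (n : ℕ) (x : X) :
    escapeApprox φ h q n (φ x) = q * escapeApprox φ h q (n + 1) x := by
  simp only [escapeApprox, Function.iterate_succ_apply]
  field_simp
  ring

lemma escapeRate_eq_zero_of_forall_abs_le (hq : 1 < q) {x : X} {M : ℝ}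
    (hM : ∀ n, |h (φ^[n] x)| ≤ M) : escapeRate φ h q x = 0 := by
  refine Tendsto.limUnder_eq (squeeze_zero_norm (a := fun n ↦ q⁻¹ ^ n * M) (fun n ↦ ?_) ?_)
  · simpa [escapeApprox, abs_of_pos (zero_lt_one.trans hq)] using
      mul_le_mul_of_nonneg_left (hM n) (by positivity : 0 ≤ q⁻¹ ^ n)
  · simpa using (tendsto_pow_atTop_nhds_zero_of_lt_one (by positivity)
      (inv_lt_one_of_one_lt₀ hq)).mul_const M

variable {s : Set X} {D : ℝ}

lemma dist_escapeApprox_succ_le (hq : 0 < q) (hs : MapsTo φ s s)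
    (hD : ∀ x ∈ s, |h (φ x) - q * h x| ≤ D) {x : X} (hx : x ∈ s) (n : ℕ) :
    dist (escapeApprox φ h q n x) (escapeApprox φ h q (n + 1) x) ≤ D / q * q⁻¹ ^ n := by
  have key : escapeApprox φ h q n x - escapeApprox φ h q (n + 1) x =
      -(q⁻¹ ^ (n + 1) * (h (φ (φ^[n] x)) - q * h (φ^[n] x))) := by
    simp only [escapeApprox, Function.iterate_succ_apply', inv_pow]
    field_simp
    ring
  rw [Real.dist_eq, key, abs_neg, abs_mul, abs_of_pos (by positivity)]
  calc q⁻¹ ^ (n + 1) * |h (φ (φ^[n] x)) - q * h (φ^[n] x)| ≤ q⁻¹ ^ (n + 1) * D :=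
        mul_le_mul_of_nonneg_left (hD _ (hs.iterate n hx)) (by positivity)
    _ = D / q * q⁻¹ ^ n := by ring

lemma tendsto_escapeApprox (hq : 1 < q) (hs : MapsTo φ s s)
    (hD : ∀ x ∈ s, |h (φ x) - q * h x| ≤ D) {x : X} (hx : x ∈ s) :
    Tendsto (escapeApprox φ h q · x) atTop (𝓝 (escapeRate φ h q x)) :=
  (cauchySeq_of_le_geometric _ _ (inv_lt_one_of_one_lt₀ hq)
    (dist_escapeApprox_succ_le (zero_lt_one.trans hq) hs hD hx)).tendsto_limUnder

lemma dist_escapeApprox_escapeRate_le (hq : 1 < q) (hs : MapsTo φ s s)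
    (hD : ∀ x ∈ s, |h (φ x) - q * h x| ≤ D) {x : X} (hx : x ∈ s) (n : ℕ) :
    dist (escapeApprox φ h q n x) (escapeRate φ h q x) ≤ D / (q - 1) * q⁻¹ ^ n := by
  have hq0 : q ≠ 0 := (zero_lt_one.trans hq).ne'
  have hq1 : q - 1 ≠ 0 := (sub_pos.2 hq).ne'
  convert dist_le_of_le_geometric_of_tendsto _ _ (inv_lt_one_of_one_lt₀ hq)
    (dist_escapeApprox_succ_le (zero_lt_one.trans hq) hs hD hx)
    (tendsto_escapeApprox hq hs hD hx) n using 1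
  field_simp

lemma abs_escapeRate_sub_le (hq : 1 < q) (hs : MapsTo φ s s)
    (hD : ∀ x ∈ s, |h (φ x) - q * h x| ≤ D) {x : X} (hx : x ∈ s) :
    |escapeRate φ h q x - h x| ≤ D / (q - 1) := by
  simpa [escapeApprox_zero, abs_sub_comm, Real.dist_eq] using
    dist_escapeApprox_escapeRate_le hq hs hD hx 0

lemma escapeRate_pos (hq : 1 < q) (hs : MapsTo φ s s)
    (hD : ∀ x ∈ s, |h (φ x) - q * h x| ≤ D) {x : X} (hx : x ∈ s) {n : ℕ}
    (hn : D / (q - 1) < h (φ^[n] x)) : 0 < escapeRate φ h q x := by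
  have hdist := (abs_le.1 (dist_escapeApprox_escapeRate_le hq hs hD hx n)).2
  have hpow : 0 < q⁻¹ ^ n := by positivity
  have : q⁻¹ ^ n * (D / (q - 1)) < q⁻¹ ^ n * h (φ^[n] x) := mul_lt_mul_of_pos_left hn hpow
  simp only [escapeApprox, inv_pow] at hdist this
  linarith

lemma escapeRate_map_eq_mul (hq : 1 < q) (hs : MapsTo φ s s)
    (hD : ∀ x ∈ s, |h (φ x) - q * h x| ≤ D) {x : X} (hx : x ∈ s) :
    escapeRate φ h q (φ x) = q * escapeRate φ h q x := by
  refine Tendsto.limUnder_eq ?_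
  simp only [escapeApprox_map_eq_mul_succ (zero_lt_one.trans hq).ne']
  exact
    ((tendsto_escapeApprox hq hs hD hx).comp (tendsto_add_atTop_nat 1)).const_mul q

lemma tendstoUniformly_escapeApprox (hq : 1 < q) (hD : ∀ x, |h (φ x) - q * h x| ≤ D) :
    TendstoUniformly (escapeApprox φ h q) (escapeRate φ h q) atTop := by
  have hD' : ∀ x ∈ univ, |h (φ x) - q * h x| ≤ D := fun x _ ↦ hD x
  have hlim : Tendsto (fun n : ℕ ↦ D / (q - 1) * q⁻¹ ^ n) atTop (𝓝 0) := by
    simpa using (tendsto_pow_atTop_nhds_zero_of_lt_one (by positivity)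
      (inv_lt_one_of_one_lt₀ hq)).const_mul (D / (q - 1))
  refine Metric.tendstoUniformly_iff.2 fun ε hε ↦ ?_
  filter_upwards [hlim.eventually (gt_mem_nhds hε)] with n hn x
  rw [dist_comm]
  exact (dist_escapeApprox_escapeRate_le hq (mapsTo_univ _ _) hD' (mem_univ x) n).trans_lt hn

lemma continuous_escapeRate [TopologicalSpace X] (hφ : Continuous φ) (hh : Continuous h)
    (hq : 1 < q) (hD : ∀ x, |h (φ x) - q * h x| ≤ D) : Continuous (escapeRate φ h q) :=
  (tendstoUniformly_escapeApprox hq hD).continuous <| Frequently.of_forall fun n ↦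
    continuous_const.mul (hh.comp (hφ.iterate n))

lemma tendsto_escapeRate_sub {l : Filter X} (hq : 1 < q)
    (hl : ∀ ε > 0, ∃ s ∈ l, MapsTo φ s s ∧ ∀ x ∈ s, |h (φ x) - q * h x| ≤ ε) :
    Tendsto (fun x ↦ escapeRate φ h q x - h x) l (𝓝 0) := by
  have hq1 : 0 < q - 1 := sub_pos.2 hq
  refine Metric.tendsto_nhds.2 fun ε hε ↦ ?_
  obtain ⟨s, hsl, hs, hD⟩ := hl (ε / 2 * (q - 1)) (by positivity)
  filter_upwards [hsl] with x hx
  rw [Real.dist_0_eq_abs]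
  calc |escapeRate φ h q x - h x| ≤ ε / 2 * (q - 1) / (q - 1) :=
        abs_escapeRate_sub_le hq hs hD hx
    _ < ε := by rw [mul_div_cancel_right₀ _ hq1.ne']; linarith

end EscapeRate

lemma exists_forall_abs_le_of_tendsto_cobounded {X : Type*} [PseudoMetricSpace X]
    [ProperSpace X] {u : X → ℝ} {a : ℝ} (hu : Continuous u) (hlim : Tendsto u (cobounded X) (𝓝 a)) :
    ∃ C, ∀ x, |u x| ≤ C := by
  have hfar : ∀ᶠ x in cocompact X, |u x| ≤ |a| + 1 := by
    rw [← Metric.cobounded_eq_cocompact]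
    filter_upwards [hlim.eventually (Metric.closedBall_mem_nhds a one_pos)] with x hx
    have := abs_sub_abs_le_abs_sub (u x) a
    rw [Real.dist_eq] at hx
    linarith
  obtain ⟨K, hK, hKc⟩ := mem_cocompact.1 hfar
  obtain ⟨C, hC⟩ := hK.exists_bound_of_continuousOn hu.continuousOn
  refine ⟨max C (|a| + 1), fun x ↦ ?_⟩
  by_cases hx : x ∈ K
  · exact (hC x hx).trans (le_max_left _ _)
  · exact (hKc hx).trans (le_max_right _ _)

lemma posLog_norm_le_of_isBounded {E : Type*} [SeminormedAddCommGroup E] {u : ℕ → E}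
    (hu : IsBounded (range u)) : ∃ M, ∀ n, |log⁺ ‖u n‖| ≤ M := by
  obtain ⟨M, hM⟩ := isBounded_iff_forall_norm_le.1 hu
  exact ⟨log⁺ M, fun n ↦ (abs_of_nonneg posLog_nonneg).trans_le
    (posLog_le_posLog (norm_nonneg _) (hM _ (mem_range_self n)))⟩

lemma exists_lt_posLog_norm_of_not_isBounded {E : Type*} [SeminormedAddCommGroup E] {u : ℕ → E}
    (hu : ¬IsBounded (range u)) (M : ℝ) : ∃ n, M < log⁺ ‖u n‖ := by
  obtain ⟨n, hn⟩ : ∃ n, exp M < ‖u n‖ := by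
    by_contra! h
    exact hu (isBounded_iff_forall_norm_le.2 ⟨exp M, forall_mem_range.2 h⟩)
  exact ⟨n, (lt_log_iff_exp_lt ((exp_pos M).trans hn)).2 hn |>.trans_le (le_max_right _ _)⟩

namespace Polynomial

variable {𝕜 : Type*} [NormedField 𝕜] {f : 𝕜[X]}

lemma tendsto_log_norm_eval_sub_cobounded (f : 𝕜[X]) :
    Tendsto (fun w ↦ log ‖f.eval w‖ - f.natDegree * log ‖w‖) (cobounded 𝕜)
      (𝓝 (log ‖f.leadingCoeff‖)) := by
  rcases eq_or_ne f 0 with rfl | hf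
  · simpa using tendsto_const_nhds
  have hlc : f.leadingCoeff ≠ 0 := leadingCoeff_ne_zero.2 hf
  have hne : ∀ᶠ w in cobounded 𝕜, f.leadingCoeff * w ^ f.natDegree ≠ 0 :=
    (eventually_ne_cobounded 0).mono fun w hw ↦ mul_ne_zero hlc (pow_ne_zero _ hw)
  have hratio : Tendsto (fun w ↦ f.eval w / (f.leadingCoeff * w ^ f.natDegree))
      (cobounded 𝕜) (𝓝 1) :=
    (Asymptotics.isEquivalent_iff_tendsto_one hne).1 isEquivalent_cobounded_leading_monomial
  have hlog := (hratio.norm.log (by simp)).add_const (log ‖f.leadingCoeff‖)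
  rw [norm_one, log_one, zero_add] at hlog
  refine hlog.congr' ?_
  filter_upwards [eventually_ne_cobounded 0, hratio.eventually_ne one_ne_zero] with w hw hfw
  have hfw' : f.eval w ≠ 0 := fun h0 ↦ hfw (by rw [h0, zero_div])
  rw [norm_div, norm_mul, norm_pow, log_div (norm_ne_zero_iff.2 hfw') (by simp [hlc, hw]),
    log_mul (norm_ne_zero_iff.2 hlc) (by simp [hw]), log_pow]
  ring

lemma tendsto_posLog_norm_eval_sub_cobounded (hd : 0 < f.natDegree) :
    Tendsto (fun w ↦ log⁺ ‖f.eval w‖ - f.natDegree * log⁺ ‖w‖) (cobounded 𝕜)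
      (𝓝 (log ‖f.leadingCoeff‖)) := by
  refine (tendsto_log_norm_eval_sub_cobounded f).congr' ?_
  have hf :=
    f.tendsto_norm_atTop (natDegree_pos_iff_degree_pos.1 hd) tendsto_norm_cobounded_atTop
  filter_upwards [tendsto_norm_cobounded_atTop.eventually_ge_atTop 1,
    hf.eventually_ge_atTop 1] with w hw hfw
  rw [posLog_eq_log (by rwa [abs_norm]), posLog_eq_log (by rwa [abs_norm])]

lemma eventually_norm_le_norm_eval_cobounded (hd : 1 < f.natDegree) :
    ∀ᶠ w in cobounded 𝕜, ‖w‖ ≤ ‖f.eval w‖ := by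
  have hX : (X : 𝕜[X]).degree < f.degree := degree_lt_degree (by rwa [natDegree_X])
  simpa using (isLittleO_cobounded_of_degree_lt hX).bound one_pos

lemma exists_mapsTo_abs_posLog_sub_le (hf : f.Monic) (hd : 1 < f.natDegree) {ε : ℝ}
    (hε : 0 < ε) : ∃ s ∈ cobounded 𝕜, MapsTo f.eval s s ∧
      ∀ w ∈ s, |log⁺ ‖f.eval w‖ - f.natDegree * log⁺ ‖w‖| ≤ ε := by
  have hlim := tendsto_posLog_norm_eval_sub_cobounded (f := f) (by omega)
  rw [hf.leadingCoeff, norm_one, log_one] at hlim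
  have hev := (eventually_norm_le_norm_eval_cobounded hd).and
    (hlim.eventually (Metric.closedBall_mem_nhds 0 hε))
  rw [← comap_norm_atTop, eventually_comap, eventually_atTop] at hev
  obtain ⟨R, hR⟩ := hev
  have hsR : ∀ w : 𝕜, R ≤ ‖w‖ → ‖w‖ ≤ ‖f.eval w‖ ∧ _ := fun w hw ↦ hR _ hw w rfl
  refine ⟨{w | R ≤ ‖w‖}, tendsto_norm_cobounded_atTop.eventually_ge_atTop R,
    fun w hw ↦ hw.trans (hsR w hw).1, fun w hw ↦ ?_⟩
  simpa [Real.dist_eq] using (hsR w hw).2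

end Polynomial

/-- Existence and properties of the Green's function of the filled Julia set of a monic
polynomial of degree `q ≥ 2`: the limit `g(z) = lim_n q^{-n} log⁺|f^[n](z)|` exists for
every `z`, and `g` is continuous, satisfies `g(f(z)) = q g(z)`, vanishes exactly on the
filled Julia set and is strictly positive off it, and `g(z) - log|z| → 0` as `|z| → ∞`. -/
theorem stmt_6 (q : ℕ) (hq : 2 ≤ q) (f : Polynomial ℂ)
    (hmonic : f.Monic) (hdeg : f.natDegree = q) :
    ∃ g : ℂ → ℝ,
      (∀ z : ℂ, Filter.Tendsto
        (fun n : ℕ => ((q : ℝ) ^ n)⁻¹ *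
          max (Real.log ‖(fun w : ℂ => f.eval w)^[n] z‖) 0)
        Filter.atTop (nhds (g z))) ∧
      Continuous g ∧
      (∀ z : ℂ, g (f.eval z) = q * g z) ∧
      (∀ z : ℂ, g z = 0 ↔ z ∈ filledJulia f) ∧
      (∀ z : ℂ, z ∉ filledJulia f → 0 < g z) ∧
      Filter.Tendsto (fun z : ℂ => g z - Real.log ‖z‖)
        (Filter.comap (fun z : ℂ => ‖z‖) Filter.atTop) (nhds 0) := by
  subst hdeg
  have hq1 : (1 : ℝ) < f.natDegree := by exact_mod_cast hq
  obtain ⟨C, hC⟩ : ∃ C, ∀ w, |log⁺ ‖f.eval w‖ - f.natDegree * log⁺ ‖w‖| ≤ C :=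
    exists_forall_abs_le_of_tendsto_cobounded (by fun_prop)
      (Polynomial.tendsto_posLog_norm_eval_sub_cobounded (by omega))
  have hC' : ∀ w ∈ univ, |log⁺ ‖f.eval w‖ - f.natDegree * log⁺ ‖w‖| ≤ C := fun w _ ↦ hC w
  have hpos : ∀ z, z ∉ filledJulia f → 0 < escapeRate f.eval (log⁺ ‖·‖) f.natDegree z := by
    intro z hz
    obtain ⟨n, hn⟩ := exists_lt_posLog_norm_of_not_isBounded (u := fun n ↦ f.eval^[n] z) hz
      (C / (f.natDegree - 1))
    exact escapeRate_pos hq1 (mapsTo_univ _ _) hC' (mem_univ z) hn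
  refine ⟨escapeRate f.eval (log⁺ ‖·‖) f.natDegree, fun z ↦ ?_, continuous_escapeRate
    (Polynomial.continuous f) (by fun_prop) hq1 hC,
    fun z ↦ escapeRate_map_eq_mul hq1 (mapsTo_univ _ _) hC' (mem_univ z), fun z ↦ ⟨?_, ?_⟩,
    hpos, ?_⟩
  · simpa only [escapeApprox, posLog_apply, max_comm] using
      tendsto_escapeApprox hq1 (mapsTo_univ _ _) hC' (mem_univ z)
  · exact fun h0 ↦ by_contra fun hz ↦ (hpos z hz).ne' h0
  · intro hz
    obtain ⟨M, hM⟩ := posLog_norm_le_of_isBounded (u := fun n ↦ f.eval^[n] z) hz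
    exact escapeRate_eq_zero_of_forall_abs_le hq1 hM
  · rw [comap_norm_atTop]
    refine (tendsto_escapeRate_sub (φ := f.eval) (h := (log⁺ ‖·‖)) hq1 fun ε hε ↦
      Polynomial.exists_mapsTo_abs_posLog_sub_le hmonic (by omega) hε).congr' ?_
    filter_upwards [tendsto_norm_cobounded_atTop.eventually_ge_atTop 1] with z hz
    rw [posLog_eq_log (by rwa [abs_norm])]
end

section
/- (Uniqueness of the Green's function.) Let f be a monic complex polynomial of degree q ≥ 2. There is at most one continuous function g : ℂ → ℝ such that g vanishes on the filled Julia set K(f), g is strictly positive on ℂ \ K(f), g(f(z)) = q·g(z) for all z ∈ ℂ, and g(z) − log|z| → 0 as |z| → ∞. -/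
open Filter Bornology Function Set

theorem Continuous.isBounded_range_of_tendsto_cocompact {α β : Type*} [TopologicalSpace α]
    [SeminormedAddCommGroup β] {h : α → β} (hc : Continuous h)
    (ht : Tendsto h (cocompact α) (nhds 0)) : IsBounded (range h) :=
  ZeroAtInftyContinuousMap.isBounded_range ⟨⟨h, hc⟩, ht⟩

theorem eq_zero_of_isBounded_range_of_map_eq_mul {X 𝕜 : Type*} [NormedField 𝕜]
    {T : X → X} {h : X → 𝕜} {c : 𝕜} (hc : 1 < ‖c‖) (hb : IsBounded (range h))
    (hT : ∀ x, h (T x) = c * h x) (x : X) : h x = 0 := by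
  obtain ⟨M, hM⟩ := isBounded_iff_forall_norm_le.1 hb
  have horbit : ∀ n, ‖c‖ ^ n * ‖h x‖ ≤ M := fun n => by
    have hsemiconj : Semiconj h T (c * ·) := hT
    simpa [hsemiconj.iterate_right n x] using hM _ (mem_range_self (T^[n] x))
  by_contra hx
  have hpos : 0 < ‖h x‖ := norm_pos_iff.2 hx
  obtain ⟨n, hn⟩ := pow_unbounded_of_one_lt (M / ‖h x‖) hc
  exact (horbit n).not_gt ((div_lt_iff₀ hpos).1 hn)

theorem stmt_7_general (q : ℕ) (hq : 2 ≤ q) (f : Polynomial ℂ)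
    (g₁ g₂ : ℂ → ℝ) (hc₁ : Continuous g₁) (hc₂ : Continuous g₂)
    (hf₁ : ∀ z : ℂ, g₁ (f.eval z) = q * g₁ z) (hf₂ : ∀ z : ℂ, g₂ (f.eval z) = q * g₂ z)
    (ht₁ : Filter.Tendsto (fun z : ℂ => g₁ z - Real.log (‖z‖))
      (Filter.comap (fun z : ℂ => ‖z‖) Filter.atTop) (nhds 0))
    (ht₂ : Filter.Tendsto (fun z : ℂ => g₂ z - Real.log (‖z‖))
      (Filter.comap (fun z : ℂ => ‖z‖) Filter.atTop) (nhds 0)) :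
    g₁ = g₂ := by
  have hlim : Tendsto (g₁ - g₂) (cocompact ℂ) (nhds 0) := by
    rw [← Metric.cobounded_eq_cocompact, ← comap_norm_atTop]
    simpa [Pi.sub_def] using ht₁.sub ht₂
  have hq_norm : 1 < ‖(q : ℝ)‖ := by
    rw [Real.norm_natCast]
    exact_mod_cast hq
  have hfun : ∀ z, (g₁ - g₂) (f.eval z) = q * (g₁ - g₂) z := fun z => by
    simp only [Pi.sub_apply, hf₁, hf₂, mul_sub]
  funext z
  exact sub_eq_zero.1 <| eq_zero_of_isBounded_range_of_map_eq_mul hq_norm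
    ((hc₁.sub hc₂).isBounded_range_of_tendsto_cocompact hlim) hfun z

/-- Uniqueness of the Green's function: there is at most one continuous `g : ℂ → ℝ`
vanishing on the filled Julia set, strictly positive off it, satisfying
`g(f(z)) = q g(z)`, and with `g(z) - log|z| → 0` as `|z| → ∞`. -/
theorem stmt_7 (q : ℕ) (hq : 2 ≤ q) (f : Polynomial ℂ)
    (hmonic : f.Monic) (hdeg : f.natDegree = q)
    (g₁ g₂ : ℂ → ℝ) (hc₁ : Continuous g₁) (hc₂ : Continuous g₂)
    (hv₁ : ∀ z ∈ filledJulia f, g₁ z = 0) (hv₂ : ∀ z ∈ filledJulia f, g₂ z = 0)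
    (hp₁ : ∀ z ∉ filledJulia f, 0 < g₁ z) (hp₂ : ∀ z ∉ filledJulia f, 0 < g₂ z)
    (hf₁ : ∀ z : ℂ, g₁ (f.eval z) = q * g₁ z) (hf₂ : ∀ z : ℂ, g₂ (f.eval z) = q * g₂ z)
    (ht₁ : Filter.Tendsto (fun z : ℂ => g₁ z - Real.log (‖z‖))
      (Filter.comap (fun z : ℂ => ‖z‖) Filter.atTop) (nhds 0))
    (ht₂ : Filter.Tendsto (fun z : ℂ => g₂ z - Real.log (‖z‖))
      (Filter.comap (fun z : ℂ => ‖z‖) Filter.atTop) (nhds 0)) :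
    g₁ = g₂ :=
  stmt_7_general q hq f g₁ g₂ hc₁ hc₂ hf₁ hf₂ ht₁ ht₂
end
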